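/- Let S be a nonempty set, let 0 = τ₀ < τ₁ < … < τ_T < τ_{T+1} = 1 be ordered quantile levels, and set ε = max_{t=1,…,T+1} (τ_t − τ_{t−1}). Suppose that for each x ∈ S, F_x and G_x are distribution functions on [0,1] and there exist points y_{x,1} ≤ … ≤ y_{x,T} such that F_x(y_{x,t}) = G_x(y_{x,t}) = τ_t for t = 1, …, T. Then sup_{x ∈ S} d_L(F_x, G_x) ≤ ε. -/
import Mathlib


open MeasureTheory Filter Set

/-- A distribution function on `[0,1]`: nondecreasing, right-continuous, with values in `[0,1]`,
equal to `0` below `0` and equal to `1` from `1` on. -/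
def IsDistFunOn01 (F : ℝ → ℝ) : Prop :=
  Monotone F ∧ (∀ y : ℝ, ContinuousWithinAt F (Set.Ici y) y) ∧
    (∀ y : ℝ, F y ∈ Set.Icc (0 : ℝ) 1) ∧ (∀ y : ℝ, y < 0 → F y = 0) ∧
    (∀ y : ℝ, 1 ≤ y → F y = 1)

/-- The Lévy distance between two (distribution) functions:
`d_L(F,G) = inf {ε > 0 : F(y − ε) − ε ≤ G(y) ≤ F(y + ε) + ε for all y}`. -/
noncomputable def levyDist (F G : ℝ → ℝ) : ℝ :=
  sInf {ε : ℝ | 0 < ε ∧ ∀ y : ℝ, F (y - ε) - ε ≤ G y ∧ G y ≤ F (y + ε) + ε}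

/-- Pointwise bound: if `F` and `G` share quantile points, then `F v ≤ G v + ε`. -/
lemma pointwise_le_of_shared_quantiles
    (T : ℕ) (τ : ℕ → ℝ) (hτ0 : τ 0 = 0) (hτlast : τ (T + 1) = 1)
    (ε : ℝ) (hε : ∀ t, 1 ≤ t → t ≤ T + 1 → τ t - τ (t - 1) ≤ ε)
    (F G : ℝ → ℝ) (hF : IsDistFunOn01 F) (hG : IsDistFunOn01 G)
    (y : ℕ → ℝ)
    (hFy : ∀ t, 1 ≤ t → t ≤ T → F (y t) = τ t)
    (hGy : ∀ t, 1 ≤ t → t ≤ T → G (y t) = τ t)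
    (v : ℝ) : F v ≤ G v + ε := by
  by_cases h : ∃ t, 1 ≤ t ∧ t ≤ T ∧ v < y t
  · classical
    obtain ⟨ht1, htT, hvt⟩ := Nat.find_spec h
    set t := Nat.find h with ht
    have hFle : F v ≤ τ t := by
      rw [← hFy t ht1 htT]; exact hF.1 hvt.le
    have hGge : τ (t - 1) ≤ G v := by
      rcases Nat.eq_or_lt_of_le ht1 with h1 | h1
      · simp [← h1, hτ0]
        exact (hG.2.2.1 v).1
      · have hmin := Nat.find_min h (m := t - 1) (by omega)
        push_neg at hmin
        have : y (t - 1) ≤ v := hmin (by omega) (by omega)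
        rw [← hGy (t - 1) (by omega) (by omega)]
        exact hG.1 this
    have := hε t ht1 (by omega)
    linarith
  · push_neg at h
    have hFle : F v ≤ τ (T + 1) := by
      rw [hτlast]; exact (hF.2.2.1 v).2
    have hGge : τ T ≤ G v := by
      rcases Nat.eq_zero_or_pos T with h0 | h0
      · rw [h0, hτ0]; exact (hG.2.2.1 v).1
      · rw [← hGy T h0 le_rfl]
        exact hG.1 (h T h0 le_rfl)
    have := hε (T + 1) (by omega) le_rfl
    simp only [Nat.add_sub_cancel] at this
    linarith

/-- If, for each index `x` in a nonempty set `S`, the distribution functions `F_x` and `G_x`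
agree at points realizing a common grid of quantile levels
`0 = τ₀ < τ₁ < ⋯ < τ_T < τ_{T+1} = 1`, then the supremum over `x ∈ S` of their Lévy distances
is at most the largest gap `ε = max_{t=1,…,T+1} (τ_t − τ_{t−1})`. -/
theorem sup_levyDist_le_of_shared_quantiles
    {S : Type*} [Nonempty S]
    (T : ℕ) (τ : ℕ → ℝ)
    (hτ0 : τ 0 = 0) (hτlast : τ (T + 1) = 1)
    (hτmono : ∀ t, t ≤ T → τ t < τ (t + 1))
    (ε : ℝ)
    (hε : ε = (Finset.Icc 1 (T + 1)).sup'
      (Finset.nonempty_Icc.mpr (by omega)) (fun t => τ t - τ (t - 1)))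
    (F G : S → ℝ → ℝ)
    (hF : ∀ x : S, IsDistFunOn01 (F x)) (hG : ∀ x : S, IsDistFunOn01 (G x))
    (y : S → ℕ → ℝ)
    (hy_mono : ∀ x : S, ∀ s t, 1 ≤ s → s ≤ t → t ≤ T → y x s ≤ y x t)
    (hFy : ∀ x : S, ∀ t, 1 ≤ t → t ≤ T → F x (y x t) = τ t)
    (hGy : ∀ x : S, ∀ t, 1 ≤ t → t ≤ T → G x (y x t) = τ t) :
    (⨆ x : S, levyDist (F x) (G x)) ≤ ε := by
  have hεub : ∀ t, 1 ≤ t → t ≤ T + 1 → τ t - τ (t - 1) ≤ ε := by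
    intro t h1 h2
    rw [hε]
    exact Finset.le_sup' (fun t => τ t - τ (t - 1)) (Finset.mem_Icc.mpr ⟨h1, h2⟩)
  have hεpos : 0 < ε := by
    have h1 := hεub 1 le_rfl (by omega)
    have h2 := hτmono 0 (by omega)
    simp only [Nat.sub_self, hτ0] at h1
    linarith
  refine ciSup_le fun x => csInf_le ⟨0, fun a ha => ha.1.le⟩ ⟨hεpos, fun v => ?_⟩
  have hFG := pointwise_le_of_shared_quantiles T τ hτ0 hτlast ε hεub
    (F x) (G x) (hF x) (hG x) (y x) (hFy x) (hGy x)
  have hGF := pointwise_le_of_shared_quantiles T τ hτ0 hτlast ε hεub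
    (G x) (F x) (hG x) (hF x) (y x) (hGy x) (hFy x)
  constructor
  · have h1 := hFG (v - ε)
    have h2 : G x (v - ε) ≤ G x v := (hG x).1 (by linarith)
    linarith
  · have h1 := hGF v
    have h2 : F x v ≤ F x (v + ε) := (hF x).1 (by linarith)
    linarith
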